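/- Let K be a field with absolute Galois group isomorphic to the profinite completion Ẑ of ℤ, let σ be a topological generator, let L be an extension of K with K algebraically closed in L, and let τ be an automorphism of the algebraic closure of L extending σ with fixed field M. Then for every n, if K_n is the unique degree-n extension of K, then MK_n is the unique degree-n extension of M. -/

import Mathlib

/-!
Since `τ` extends `σ` and `σ` fixes exactly `K`, inside `L̃` the fields `K̃` and `M` meet
in `K`. If `K_n = K(a)`, every root of the minimal polynomial of `a` over `M` is a root of
its minimal polynomial over `K`, hence lies in `K̃`; so its coefficients lie in `K̃ ∩ M = K`,
the two minimal polynomials agree and `[M K_n : M] = n`. For uniqueness, `M` is perfect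
(a `p`-th root of an element fixed by `τ` is fixed by `τ`), so `L̃ / M` is Galois, and `τ`
restricts to a generator of the Galois group of every finite Galois subextension. Two
extensions of degree `n` lie in such a subextension, where they correspond to subgroups of
the same order of a cyclic group.
-/
open Polynomial IntermediateField

theorem Subgroup.eq_of_card_eq_of_isCyclic {G : Type*} [Group G] [Finite G] [IsCyclic G]
    {H H' : Subgroup G} (h : Nat.card H = Nat.card H') : H = H' := by
  let := IsCyclic.commGroup (α := G)
  have eq_ker (J : Subgroup G) : J = (powMonoidHom (Nat.card J) : G →* G).ker := by
    refine Subgroup.eq_of_le_of_card_ge (fun x hx => ?_) ?_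
    · exact congrArg Subtype.val (pow_card_eq_one' (x := (⟨x, hx⟩ : J)))
    · rw [IsCyclic.card_powMonoidHom_ker, Nat.gcd_eq_right (Subgroup.card_subgroup_dvd_card J)]
  rw [eq_ker H, eq_ker H', h]

theorem IntermediateField.eq_of_finrank_eq_of_isCyclic {F Ω : Type*} [Field F] [Field Ω]
    [Algebra F Ω] [FiniteDimensional F Ω] [IsGalois F Ω] [IsCyclic Gal(Ω/F)]
    {E E' : IntermediateField F Ω} (h : Module.finrank F E = Module.finrank F E') : E = E' := by
  have hmul (E : IntermediateField F Ω) :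
      Module.finrank F E * Nat.card E.fixingSubgroup = Module.finrank F Ω := by
    rw [IsGalois.card_fixingSubgroup_eq_finrank, Module.finrank_mul_finrank]
  have hcard : Nat.card E.fixingSubgroup = Nat.card E'.fixingSubgroup :=
    Nat.eq_of_mul_eq_mul_left (Module.finrank_pos (R := F) (M := E)) (by rw [hmul, h, hmul])
  rw [← IsGalois.fixedField_fixingSubgroup E, ← IsGalois.fixedField_fixingSubgroup E',
    Subgroup.eq_of_card_eq_of_isCyclic hcard]

section FixedPoints

variable {F Ω : Type*} [Field F] [Field Ω] [Algebra F Ω] (g : Ω ≃ₐ[F] Ω)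

theorem PerfectField.of_fixed_mem_range [PerfectField Ω]
    (hg : ∀ x, g x = x → x ∈ (algebraMap F Ω).range) : PerfectField F := by
  obtain ⟨p, hp⟩ := ExpChar.exists F
  cases hp with
  | zero => exact PerfectField.ofCharZero
  | prime hprime =>
    have : Fact p.Prime := ⟨hprime⟩
    have : ExpChar Ω p := expChar_of_injective_algebraMap (algebraMap F Ω).injective p
    have : PerfectRing F p := by
      refine PerfectRing.ofSurjective F p fun k => ?_
      obtain ⟨x, hx⟩ := surjective_frobenius Ω p (algebraMap F Ω k)
      rw [frobenius_def] at hx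
      have hgx : g x = x := frobenius_inj Ω p <| by
        simp only [frobenius_def, ← map_pow, hx, AlgEquiv.commutes]
      obtain ⟨k', rfl⟩ := hg x hgx
      exact ⟨k', (algebraMap F Ω).injective (by rwa [frobenius_def, map_pow])⟩
    exact PerfectRing.toPerfectField F p

theorem isGalois_of_fixed_mem_range [IsAlgClosed Ω] [Algebra.IsAlgebraic F Ω]
    (hg : ∀ x, g x = x → x ∈ (algebraMap F Ω).range) : IsGalois F Ω :=
  have : PerfectField F := .of_fixed_mem_range g hg
  have : IsAlgClosure F Ω := ⟨inferInstance, inferInstance⟩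
  isGalois_iff.mpr ⟨inferInstance, inferInstance⟩

theorem isCyclic_of_fixed_mem_range (N : IntermediateField F Ω) [FiniteDimensional F N]
    [IsGalois F N] (hg : ∀ x, g x = x → x ∈ (algebraMap F Ω).range) : IsCyclic Gal(N/F) := by
  refine isCyclic_iff_exists_zpowers_eq_top.mpr ⟨g.restrictNormal N, ?_⟩
  have hfixed : fixedField (Subgroup.zpowers (g.restrictNormal N)) = ⊥ := by
    refine eq_bot_iff.mpr fun x hx => ?_
    have hx' : g.restrictNormal N x = x := hx ⟨_, Subgroup.mem_zpowers _⟩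
    have hgx : g x = x := by
      simpa [hx'] using (g.restrictNormal_commutes N x).symm
    obtain ⟨k, hk⟩ := hg x hgx
    exact ⟨k, Subtype.val_injective hk⟩
  rw [← fixingSubgroup_fixedField (Subgroup.zpowers _), hfixed, fixingSubgroup_bot]

theorem IntermediateField.eq_of_finrank_eq_of_fixed_mem_range [IsGalois F Ω]
    (hg : ∀ x, g x = x → x ∈ (algebraMap F Ω).range) {E E' : IntermediateField F Ω}
    [FiniteDimensional F E] [FiniteDimensional F E']
    (h : Module.finrank F E = Module.finrank F E') : E = E' := by
  let N := normalClosure F ↥(E ⊔ E') Ω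
  have hE : E ≤ N := le_sup_left.trans (le_normalClosure _)
  have hE' : E' ≤ N := le_sup_right.trans (le_normalClosure _)
  have := isCyclic_of_fixed_mem_range g N hg
  have hres : restrict hE = restrict hE' := eq_of_finrank_eq_of_isCyclic <| by
    rw [← (restrictAlgEquiv hE).toLinearEquiv.finrank_eq,
      ← (restrictAlgEquiv hE').toLinearEquiv.finrank_eq, h]
  simpa only [lift_restrict] using congrArg lift hres

end FixedPoints

theorem minpoly_algebraMap_eq_map_minpoly {K Ωk F Ω : Type*} [Field K] [Field Ωk] [Field F]
    [Field Ω] [Algebra K Ωk] [IsAlgClosed Ωk] [Algebra K F] [Algebra K Ω] [Algebra Ωk Ω]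
    [Algebra F Ω] [IsScalarTower K Ωk Ω] [IsScalarTower K F Ω]
    (hdisj : ∀ x, x ∈ (algebraMap Ωk Ω).range → x ∈ (algebraMap F Ω).range →
      x ∈ (algebraMap K Ω).range)
    {a : Ωk} (ha : IsIntegral K a) :
    minpoly F (algebraMap Ωk Ω a) = (minpoly K a).map (algebraMap K F) := by
  set b := algebraMap Ωk Ω a
  set Q := minpoly K a
  set P := minpoly F b
  have hQb : minpoly K b = Q :=
    minpoly.algHom_eq (IsScalarTower.toAlgHom K Ωk Ω) (algebraMap Ωk Ω).injective a
  have hb : IsIntegral F b := (ha.map (IsScalarTower.toAlgHom K Ωk Ω)).tower_top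
  have hPQ : P ∣ Q.map (algebraMap K F) := hQb ▸ minpoly.dvd_map_of_isScalarTower K F b
  have hPQΩ : P.map (algebraMap F Ω) ∣ Q.map (algebraMap K Ω) := by
    simpa only [Polynomial.map_map, ← IsScalarTower.algebraMap_eq] using
      Polynomial.map_dvd (algebraMap F Ω) hPQ
  have hQΩ : Q.map (algebraMap K Ω) = (Q.map (algebraMap K Ωk)).map (algebraMap Ωk Ω) := by
    rw [Polynomial.map_map, ← IsScalarTower.algebraMap_eq]
  have hQsplits : (Q.map (algebraMap K Ωk)).Splits := IsAlgClosed.splits _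
  have hQΩ0 : Q.map (algebraMap K Ω) ≠ 0 := Polynomial.map_ne_zero (minpoly.ne_zero ha)
  have hPlifts : P.map (algebraMap F Ω) ∈ lifts (algebraMap Ωk Ω) := by
    refine ((hQΩ ▸ hQsplits.map _).of_dvd hQΩ0 hPQΩ).mem_lift_of_roots_mem_range
      ((minpoly.monic hb).map _) _ fun r hr => ?_
    have hrQ := Multiset.mem_of_le (roots.le_of_dvd hQΩ0 hPQΩ) hr
    rw [hQΩ, hQsplits.roots_map] at hrQ
    obtain ⟨s, -, rfl⟩ := Multiset.mem_map.mp hrQ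
    exact ⟨s, rfl⟩
  obtain ⟨Pk, hPk⟩ : ∃ Pk : K[X], Pk.map (algebraMap K F) = P := by
    refine (mem_lifts P).mp <| (lifts_iff_coeff_lifts P).mpr fun i => ?_
    obtain ⟨k, hk⟩ := hdisj _ (by simpa using (lifts_iff_coeff_lifts _).mp hPlifts i)
      ⟨P.coeff i, rfl⟩
    exact ⟨k, (algebraMap F Ω).injective (by rwa [← IsScalarTower.algebraMap_apply])⟩
  have hQPk : Q ∣ Pk := hQb ▸ minpoly.dvd K b (by
    rw [← aeval_map_algebraMap F, hPk, minpoly.aeval])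
  exact eq_of_monic_of_associated (minpoly.monic hb) ((minpoly.monic ha).map _)
    (associated_of_dvd_dvd hPQ (hPk ▸ Polynomial.map_dvd _ hQPk))

theorem finrank_adjoin_image_eq_finrank {K Ωk F Ω : Type*} [Field K] [Field Ωk] [Field F]
    [Field Ω] [Algebra K Ωk] [IsAlgClosed Ωk] [Algebra K F] [Algebra K Ω] [Algebra Ωk Ω]
    [Algebra F Ω] [IsScalarTower K Ωk Ω] [IsScalarTower K F Ω]
    (hdisj : ∀ x, x ∈ (algebraMap Ωk Ω).range → x ∈ (algebraMap F Ω).range →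
      x ∈ (algebraMap K Ω).range)
    (E : IntermediateField K Ωk) [FiniteDimensional K E] [Algebra.IsSeparable K E] :
    Module.finrank F (adjoin F (algebraMap Ωk Ω '' E)) = Module.finrank K E := by
  obtain ⟨a, rfl⟩ : ∃ a : Ωk, K⟮a⟯ = E := by
    obtain ⟨α, hα⟩ := Field.exists_primitive_element K E
    exact ⟨α, by simpa only [lift_adjoin_simple, lift_top] using congrArg lift hα⟩
  have himage : algebraMap Ωk Ω '' K⟮a⟯ = (K⟮algebraMap Ωk Ω a⟯ : Set Ω) := by
    simpa only [coe_map, Set.image_singleton, IsScalarTower.coe_toAlgHom'] using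
      congrArg SetLike.coe (adjoin_map K {a} (IsScalarTower.toAlgHom K Ωk Ω))
  have ha : IsIntegral K a := (AdjoinSimple.isIntegral_gen K a).mp (.of_finite K _)
  have hb : IsIntegral F (algebraMap Ωk Ω a) :=
    (ha.map (IsScalarTower.toAlgHom K Ωk Ω)).tower_top
  rw [himage, adjoin_adjoin_right, adjoin.finrank hb,
    minpoly_algebraMap_eq_map_minpoly hdisj ha, natDegree_map, adjoin.finrank ha]

theorem compositum_is_unique_extension_general
    (K Ktilde L Ltilde : Type*) [Field K] [Field Ktilde] [Field L] [Field Ltilde]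
    [Algebra K Ktilde] [IsAlgClosure K Ktilde]
    [Algebra K L]
    [Algebra L Ltilde] [IsAlgClosure L Ltilde]
    [Algebra K Ltilde] [Algebra Ktilde Ltilde]
    [IsScalarTower K L Ltilde] [IsScalarTower K Ktilde Ltilde]
    (σ : Ktilde ≃ₐ[K] Ktilde)
    (hσ : ∀ x : Ktilde, σ x = x → ∃ k : K, algebraMap K Ktilde k = x)
    (τ : Ltilde ≃ₐ[L] Ltilde)
    (hτσ : ∀ x : Ktilde, τ (algebraMap Ktilde Ltilde x) = algebraMap Ktilde Ltilde (σ x))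
    (M : IntermediateField L Ltilde)
    (hM : ∀ x : Ltilde, x ∈ M ↔ τ x = x) :
    ∀ n : ℕ, 1 ≤ n → ∀ Kn : IntermediateField K Ktilde, Module.finrank K Kn = n →
      ∀ E : IntermediateField M Ltilde,
        Module.finrank M E = n ↔
          E = IntermediateField.adjoin M
            (algebraMap Ktilde Ltilde '' (Kn : Set Ktilde)) := by
  intro n hn Kn hKn E
  have : IsAlgClosed Ktilde := IsAlgClosure.isAlgClosed K
  have : IsAlgClosed Ltilde := IsAlgClosure.isAlgClosed L
  have : Algebra.IsAlgebraic L Ltilde := IsAlgClosure.isAlgebraic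
  have : Algebra.IsAlgebraic M Ltilde := .tower_top (K := L) M
  have : IsScalarTower K M Ltilde := .of_algebraMap_eq' rfl
  let τM : Ltilde ≃ₐ[M] Ltilde := { τ.toRingEquiv with commutes' := fun m => (hM m).1 m.2 }
  have hτM (x : Ltilde) (hx : τM x = x) : x ∈ (algebraMap M Ltilde).range :=
    ⟨⟨x, (hM x).2 hx⟩, rfl⟩
  have : IsGalois M Ltilde := isGalois_of_fixed_mem_range τM hτM
  have : PerfectField K := .of_fixed_mem_range σ hσ
  have : FiniteDimensional K Kn := .of_finrank_pos (by omega)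
  have hdisj (x : Ltilde) (hxK : x ∈ (algebraMap Ktilde Ltilde).range)
      (hxM : x ∈ (algebraMap M Ltilde).range) : x ∈ (algebraMap K Ltilde).range := by
    obtain ⟨y, rfl⟩ := hxK
    obtain ⟨m, hm⟩ := hxM
    have hτy := (hM _).1 (hm ▸ m.2 : algebraMap Ktilde Ltilde y ∈ M)
    rw [hτσ] at hτy
    obtain ⟨k, rfl⟩ := hσ y ((algebraMap Ktilde Ltilde).injective hτy)
    exact ⟨k, IsScalarTower.algebraMap_apply K Ktilde Ltilde k⟩
  have hdeg := (finrank_adjoin_image_eq_finrank hdisj Kn).trans hKn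
  have : FiniteDimensional M (adjoin M (algebraMap Ktilde Ltilde '' Kn)) :=
    .of_finrank_pos (by omega)
  refine ⟨fun hE => ?_, fun hE => hE ▸ hdeg⟩
  have : FiniteDimensional M E := .of_finrank_pos (by omega)
  exact eq_of_finrank_eq_of_fixed_mem_range τM hτM (hE.trans hdeg.symm)

/-- Let `K` be a field whose absolute Galois group is `Ẑ` (expressed by the equivalent
condition that `K` has exactly one extension of each degree `n ≥ 1` inside a fixed
algebraic closure `K̃`), `σ` a topological generator of `Gal(K)`, `L` an extension of
`K` with `K` algebraically closed in `L`, and `τ` an automorphism of an algebraic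
closure `L̃` of `L` over `L` extending `σ`, with fixed field `M`. Then for every
`n ≥ 1`, if `K_n` is the unique degree-`n` extension of `K`, then the compositum
`M K_n` is the unique degree-`n` extension of `M`. -/
theorem compositum_is_unique_extension
    (K Ktilde L Ltilde : Type*) [Field K] [Field Ktilde] [Field L] [Field Ltilde]
    [Algebra K Ktilde] [IsAlgClosure K Ktilde]
    [Algebra K L]
    [Algebra L Ltilde] [IsAlgClosure L Ltilde]
    [Algebra K Ltilde] [Algebra Ktilde Ltilde]
    [IsScalarTower K L Ltilde] [IsScalarTower K Ktilde Ltilde]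
    (huniq : ∀ n : ℕ, 1 ≤ n →
      ∃! E : IntermediateField K Ktilde, Module.finrank K E = n)
    (σ : Ktilde ≃ₐ[K] Ktilde)
    (hσ : ∀ x : Ktilde, σ x = x → ∃ k : K, algebraMap K Ktilde k = x)
    (hreg : ∀ x : L, IsIntegral K x → ∃ k : K, algebraMap K L k = x)
    (τ : Ltilde ≃ₐ[L] Ltilde)
    (hτσ : ∀ x : Ktilde, τ (algebraMap Ktilde Ltilde x) = algebraMap Ktilde Ltilde (σ x))
    (M : IntermediateField L Ltilde)
    (hM : ∀ x : Ltilde, x ∈ M ↔ τ x = x) :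
    ∀ n : ℕ, 1 ≤ n → ∀ Kn : IntermediateField K Ktilde, Module.finrank K Kn = n →
      ∀ E : IntermediateField M Ltilde,
        Module.finrank M E = n ↔
          E = IntermediateField.adjoin M
            (algebraMap Ktilde Ltilde '' (Kn : Set Ktilde)) :=
  compositum_is_unique_extension_general K Ktilde L Ltilde σ hσ τ hτσ M hM
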